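/- arXiv:1408.2469 — 2 statements merged into one kernel-verified Lean document; each statement's English description precedes it below -/
import Mathlib

section
/- Let Λ_ε denote horizontal convolution-by-layers on the half-space ℝⁿ₊. For f ∈ W^{1,∞}(ℝⁿ₊) and g ∈ L²(ℝⁿ₊), there is a constant C independent of ε > 0 such that ‖∂̄(Λ_ε(fg) − f Λ_ε g)‖_{L²(ℝⁿ₊)} ≤ C ‖f‖_{W^{1,∞}(ℝⁿ₊)} ‖g‖_{L²(ℝⁿ₊)}, where ∂̄ is the gradient in the horizontal variables x₁,…,x_{n−1}. -/
open MeasureTheory Filter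
open scoped ENNReal NNReal

/-- Horizontal partial derivative `∂F/∂xᵢ` (`i < n−1`) of a scalar function on
`ℝⁿ = ℝ^{n−1} × ℝ`, represented as a product. -/
noncomputable def pdH {m : ℕ} (F : (Fin m → ℝ) × ℝ → ℝ) (i : Fin m)
    (p : (Fin m → ℝ) × ℝ) : ℝ :=
  fderiv ℝ F p (Pi.single i 1, 0)

/-- Horizontal convolution-by-layers: `(Λ f)(x_h, x_n) = ∫ ρ(x_h − y_h) f(y_h, x_n) dy_h`. -/
noncomputable def horizConv {m : ℕ} (ρ : (Fin m → ℝ) → ℝ) (F : (Fin m → ℝ) × ℝ → ℝ)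
    (p : (Fin m → ℝ) × ℝ) : ℝ :=
  ∫ y : Fin m → ℝ, ρ (p.1 - y) * F (y, p.2)

/-- The upper half-space `ℝⁿ₊ = {x : x_n > 0}` as a subset of `ℝ^{n−1} × ℝ`. -/
def halfSpace (m : ℕ) : Set ((Fin m → ℝ) × ℝ) := {p | 0 < p.2}

lemma typeLip {w : ℝ → ℝ} {L K : ℝ} (hK : 0 ≤ K) (τ : ℝ → Fin 3)
    (hw : HasDerivAt w L 0)
    (hpair : ∀ u v : ℝ, u ∈ Set.Ioc (0:ℝ) 1 → v ∈ Set.Ioc (0:ℝ) 1 → τ u = τ v →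
      |w u - w v| ≤ K * |u - v|) : |L| ≤ K := by
  -- find a type j with points of type j arbitrarily close to 0
  have hex : ∃ j : Fin 3, ∀ n : ℕ, ∃ x : ℝ, x ∈ Set.Ioc (0:ℝ) (min (1/(n+1)) 1) ∧ τ x = j := by
    by_contra hcon
    push_neg at hcon
    obtain ⟨n0, h0⟩ := hcon 0
    obtain ⟨n1, h1⟩ := hcon 1
    obtain ⟨n2, h2⟩ := hcon 2
    set N := max n0 (max n1 n2) with hN
    have hpos : (0:ℝ) < min (1/((N:ℝ)+1)) 1 := by
      refine lt_min (by positivity) one_pos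
    set x : ℝ := min (1/((N:ℝ)+1)) 1 with hx
    have hxm : ∀ k : ℕ, k ≤ N → x ∈ Set.Ioc (0:ℝ) (min (1/(k+1)) 1) := by
      intro k hk
      refine ⟨hpos, ?_⟩
      refine le_min (le_trans (min_le_left _ _) ?_) (min_le_right _ _)
      gcongr
    have := h0 x (hxm n0 (le_max_left _ _))
    have := h1 x (hxm n1 (le_trans (le_max_left _ _) (le_max_right _ _)))
    have := h2 x (hxm n2 (le_trans (le_max_right _ _) (le_max_right _ _)))
    have : τ x ≠ 0 ∧ τ x ≠ 1 ∧ τ x ≠ 2 := ⟨by assumption, by assumption, by assumption⟩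
    obtain ⟨a, b, c⟩ := this
    omega
  obtain ⟨j, hj⟩ := hex
  choose u hu hτ using hj
  have hu0 : ∀ n, 0 < u n := fun n => (hu n).1
  have hu1 : ∀ n, u n ≤ 1 := fun n => le_trans (hu n).2 (min_le_right _ _)
  have hulim : Tendsto u atTop (nhds 0) := by
    have h1 : Tendsto (fun n : ℕ => 1/((n:ℝ)+1)) atTop (nhds 0) :=
      tendsto_one_div_add_atTop_nhds_zero_nat
    refine squeeze_zero (fun n => (hu0 n).le) (fun n => le_trans (hu n).2 (min_le_left _ _)) h1
  have hwc : ContinuousAt w 0 := hw.continuousAt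
  have hwlim : Tendsto (fun n => w (u n)) atTop (nhds (w 0)) := hwc.tendsto.comp hulim
  -- key: |w (u n) - w 0| ≤ K * u n
  have key : ∀ n, |w (u n) - w 0| ≤ K * u n := by
    intro n
    have t1 : Tendsto (fun k => |w (u n) - w (u k)|) atTop (nhds (|w (u n) - w 0|)) :=
      ((tendsto_const_nhds.sub hwlim).abs)
    have t2 : Tendsto (fun k => K * |u n - u k|) atTop (nhds (K * |u n - 0|)) :=
      (tendsto_const_nhds.mul ((tendsto_const_nhds.sub hulim).abs))
    have hle : ∀ k, |w (u n) - w (u k)| ≤ K * |u n - u k| := fun k =>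
      hpair (u n) (u k) ⟨hu0 n, hu1 n⟩ ⟨hu0 k, hu1 k⟩ ((hτ n).trans (hτ k).symm)
    have := le_of_tendsto_of_tendsto' t1 t2 hle
    simpa [abs_of_pos (hu0 n)] using this
  -- slope convergence
  have hslope : Tendsto (fun n => (w (u n) - w 0) / (u n)) atTop (nhds L) := by
    have h1 : Tendsto (slope w 0) (nhdsWithin 0 {(0:ℝ)}ᶜ) (nhds L) :=
      hasDerivAt_iff_tendsto_slope.1 hw
    have h2 : Tendsto u atTop (nhdsWithin 0 {(0:ℝ)}ᶜ) :=
      tendsto_nhdsWithin_of_tendsto_nhds_of_eventually_within _ hulim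
        (Eventually.of_forall fun n => (hu0 n).ne')
    have := h1.comp h2
    refine this.congr fun n => ?_
    simp [Function.comp, slope_def_field]
  have habs : Tendsto (fun n => |(w (u n) - w 0) / (u n)|) atTop (nhds (|L|)) := hslope.abs
  refine le_of_tendsto habs (Eventually.of_forall fun n => ?_)
  rw [abs_div, abs_of_pos (hu0 n)]
  rw [div_le_iff₀ (hu0 n)]
  exact key n

lemma master {m : ℕ} {ρε : (Fin m → ℝ) → ℝ} {r Bρ Lρ ε M : ℝ}
    (hε : 0 < ε) (hr : 1 ≤ r) (hB : 1 ≤ Bρ) (hL : 0 ≤ Lρ)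
    (hρB : ∀ z, |ρε z| ≤ (ε^m)⁻¹ * Bρ)
    (hρL : ∀ z w, |ρε z - ρε w| ≤ (ε^m)⁻¹ * ε⁻¹ * Lρ * ‖z - w‖)
    (hρ0 : ∀ z, r * ε < ‖z‖ → ρε z = 0)
    {f g : (Fin m → ℝ) × ℝ → ℝ} (hM : 0 < M) (hfM : ∀ p, |f p| ≤ M)
    (hfL : LipschitzWith (Real.toNNReal M) f) (i : Fin m) (p : (Fin m → ℝ) × ℝ) :
    ENNReal.ofReal |pdH (fun q => horizConv ρε (fun q' => f q' * g q') q
        - f q * horizConv ρε g q) i p|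
      ≤ ENNReal.ofReal ((Lρ * (3*(3*r+3)) + Bρ) * M * (ε^m)⁻¹) *
        ∫⁻ y in Metric.closedBall p.1 ((3*r+3)*ε), ENNReal.ofReal |g (y, p.2)| := by
  set R : ℝ := 3*r+3 with hR
  set CC : ℝ := Lρ * (3*R) + Bρ with hCC
  have hR1 : 1 ≤ R := by simp only [hR]; linarith
  have hCC0 : 0 < CC := by
    have : 0 ≤ Lρ * (3*R) := by positivity
    simp only [hCC]; linarith
  have hεm : (0:ℝ) < (ε^m)⁻¹ := by positivity
  set x₀ := p.1 with hx₀
  set t := p.2 with ht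
  set hcomm : (Fin m → ℝ) × ℝ → ℝ := fun q => horizConv ρε (fun q' => f q' * g q') q
        - f q * horizConv ρε g q with hhc
  set mass : ℝ≥0∞ := ∫⁻ y in Metric.closedBall x₀ (R*ε), ENNReal.ofReal |g (y, t)| with hm
  by_cases hdiff : DifferentiableAt ℝ hcomm p
  swap
  · rw [show pdH hcomm i p = 0 by
      simp only [pdH, fderiv_zero_of_not_differentiableAt hdiff, ContinuousLinearMap.zero_apply]]
    simp
  by_cases hmass : mass = ⊤
  · rw [hmass, ENNReal.mul_top (ENNReal.ofReal_pos.mpr (by positivity : (0:ℝ) < CC * M * (ε^m)⁻¹)).ne']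
    exact le_top
  -- main case
  set S : (Fin m → ℝ) → ℝ := fun x =>
    (∫ y, ρε (x - y) * (f (y,t) * g (y,t))) - f (x,t) * ∫ y, ρε (x - y) * g (y,t) with hSdef
  have hfslice : Continuous fun y : Fin m → ℝ => f (y, t) :=
    hfL.continuous.comp (continuous_id.prodMk continuous_const)
  have hflip : ∀ a b : Fin m → ℝ, |f (a,t) - f (b,t)| ≤ M * ‖a - b‖ := by
    intro a b
    have h1 := hfL.dist_le_mul (a,t) (b,t)
    rw [Prod.dist_eq, Real.dist_eq, Real.coe_toNNReal M hM.le] at h1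
    simpa [dist_self, dist_eq_norm, max_eq_left dist_nonneg] using h1
  have hwin : ∀ (x y : Fin m → ℝ), ‖x - x₀‖ ≤ ε → ρε (x - y) ≠ 0 →
      y ∈ Metric.closedBall x₀ (R*ε) := by
    intro x y hx hne
    have h1 : ‖x - y‖ ≤ r*ε := by
      by_contra h; exact hne (hρ0 _ (lt_of_not_ge h))
    have h2 : ‖y - x₀‖ ≤ r*ε + ε := by
      have : y - x₀ = -(x - y) + (x - x₀) := by abel
      rw [this]
      exact le_trans (norm_add_le _ _) (by rw [norm_neg]; exact add_le_add h1 hx)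
    rw [Metric.mem_closedBall, dist_eq_norm]
    refine h2.trans ?_
    simp only [hR]; nlinarith
  have hlint : ∀ (c : ℝ), 0 ≤ c → ∀ (F : (Fin m → ℝ) → ℝ),
      (∀ y, |F y| ≤ Set.indicator (Metric.closedBall x₀ (R*ε)) (fun _ => c) y * |g (y,t)|) →
      ∫⁻ y, ENNReal.ofReal |F y| ≤ ENNReal.ofReal c * mass := by
    intro c hc F hF
    have hpt : ∀ y, ENNReal.ofReal |F y| ≤
        Set.indicator (Metric.closedBall x₀ (R*ε))
          (fun y => ENNReal.ofReal c * ENNReal.ofReal |g (y,t)|) y := by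
      intro y
      by_cases hy : y ∈ Metric.closedBall x₀ (R*ε)
      · rw [Set.indicator_of_mem hy]
        have := hF y
        rw [Set.indicator_of_mem hy] at this
        exact le_trans (ENNReal.ofReal_le_ofReal this) (le_of_eq (ENNReal.ofReal_mul hc))
      · rw [Set.indicator_of_notMem hy]
        have := hF y
        rw [Set.indicator_of_notMem hy, zero_mul] at this
        simp [le_antisymm this (abs_nonneg _)]
    calc ∫⁻ y, ENNReal.ofReal |F y| ≤ _ := lintegral_mono hpt
    _ = ∫⁻ y in Metric.closedBall x₀ (R*ε), ENNReal.ofReal c * ENNReal.ofReal |g (y,t)| :=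
        lintegral_indicator measurableSet_closedBall _
    _ = ENNReal.ofReal c * mass := lintegral_const_mul' _ _ ENNReal.ofReal_ne_top
  -- integrability helpers
  have hIntgen : ∀ (x : Fin m → ℝ), ‖x - x₀‖ ≤ ε → ∀ (G : (Fin m → ℝ) → ℝ) (M' : ℝ), 0 ≤ M' →
      (∀ y, |G y| ≤ M' * |g (y,t)|) →
      AEStronglyMeasurable (fun y => ρε (x - y) * G y) volume →
      Integrable (fun y => ρε (x - y) * G y) := by
    intro x hx G M' hM' hG hmeas
    refine ⟨hmeas, ?_⟩
    rw [hasFiniteIntegral_iff_norm]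
    have hb : ∀ y, |ρε (x - y) * G y| ≤
        Set.indicator (Metric.closedBall x₀ (R*ε)) (fun _ => (ε^m)⁻¹ * Bρ * M') y * |g (y,t)| := by
      intro y
      by_cases hz : ρε (x - y) = 0
      · simp only [hz, zero_mul, abs_zero]
        exact mul_nonneg (Set.indicator_nonneg (fun _ _ => by positivity) y) (abs_nonneg _)
      · rw [Set.indicator_of_mem (hwin x y hx hz), abs_mul]
        calc |ρε (x-y)| * |G y| ≤ ((ε^m)⁻¹ * Bρ) * (M' * |g (y,t)|) :=
              mul_le_mul (hρB _) (hG y) (abs_nonneg _) (by positivity)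
        _ = (ε^m)⁻¹ * Bρ * M' * |g (y,t)| := by ring
    have := hlint ((ε^m)⁻¹ * Bρ * M') (by positivity) _ hb
    simp only [Real.norm_eq_abs]
    exact lt_of_le_of_lt this (ENNReal.mul_lt_top ENNReal.ofReal_lt_top
      (lt_top_iff_ne_top.2 hmass))
  set GB : (Fin m → ℝ) → Prop := fun x =>
    AEStronglyMeasurable (fun y => ρε (x - y) * g (y,t)) volume with hGBdef
  set GA : (Fin m → ℝ) → Prop := fun x =>
    AEStronglyMeasurable (fun y => ρε (x - y) * (f (y,t) * g (y,t))) volume with hGAdef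
  have hGBA : ∀ x, GB x → GA x := by
    intro x hx
    have heq : (fun y => ρε (x - y) * (f (y,t) * g (y,t)))
        = fun y => f (y,t) * (ρε (x - y) * g (y,t)) := by funext y; ring
    have hx' : AEStronglyMeasurable (fun y => ρε (x - y) * g (y,t)) volume := hx
    show AEStronglyMeasurable (fun y => ρε (x - y) * (f (y,t) * g (y,t))) volume
    rw [heq]
    exact (hfslice.aestronglyMeasurable).mul hx'
  have intB : ∀ x, ‖x - x₀‖ ≤ ε → GB x → Integrable (fun y => ρε (x - y) * g (y,t)) := by
    intro x hx hgb
    exact hIntgen x hx _ 1 zero_le_one (fun y => by rw [one_mul]) hgb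
  have intA : ∀ x, ‖x - x₀‖ ≤ ε → GA x →
      Integrable (fun y => ρε (x - y) * (f (y,t) * g (y,t))) := by
    intro x hx hga
    refine hIntgen x hx _ M hM.le (fun y => ?_) hga
    rw [abs_mul]
    exact mul_le_mul_of_nonneg_right (hfM _) (abs_nonneg _)
  have repG : ∀ x, ‖x - x₀‖ ≤ ε → GB x → S x =
      ∫ y, (ρε (x - y) * (f (y,t) * g (y,t)) - f (x,t) * (ρε (x - y) * g (y,t))) := by
    intro x hx hgb
    have iA := intA x hx (hGBA x hgb)
    have iB := intB x hx hgb
    simp only [hSdef]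
    rw [← integral_const_mul (f (x,t)) _, ← integral_sub iA (iB.const_mul _)]
  have repB : ∀ x, ¬ GB x → S x = ∫ y, ρε (x - y) * (f (y,t) * g (y,t)) := by
    intro x hx
    have : ∫ y, ρε (x - y) * g (y,t) = 0 :=
      integral_undef (fun hI => hx hI.aestronglyMeasurable)
    simp only [hSdef, this, mul_zero, sub_zero]
  have zeroB2 : ∀ x, ¬ GB x → ¬ GA x → S x = 0 := by
    intro x hb ha
    rw [repB x hb, integral_undef (fun hI => ha hI.aestronglyMeasurable)]
  -- the generic difference estimate, given a pointwise bound on the integrand difference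
  have hdiffbound : ∀ (F1 F2 : (Fin m → ℝ) → ℝ) (c : ℝ), 0 ≤ c → Integrable F1 → Integrable F2 →
      (∀ y, |F1 y - F2 y| ≤ Set.indicator (Metric.closedBall x₀ (R*ε)) (fun _ => c) y * |g (y,t)|) →
      |(∫ y, F1 y) - ∫ y, F2 y| ≤ c * mass.toReal := by
    intro F1 F2 c hc h1 h2 hpt
    rw [← integral_sub h1 h2]
    calc |∫ y, (F1 y - F2 y)| = ‖∫ y, (F1 y - F2 y)‖ := (Real.norm_eq_abs _).symm
    _ ≤ (∫⁻ y, ENNReal.ofReal ‖F1 y - F2 y‖).toReal := norm_integral_le_lintegral_norm _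
    _ ≤ (ENNReal.ofReal c * mass).toReal := by
        refine ENNReal.toReal_mono (ENNReal.mul_ne_top ENNReal.ofReal_ne_top hmass) ?_
        simp only [Real.norm_eq_abs]
        exact hlint c hc _ hpt
    _ = c * mass.toReal := by rw [ENNReal.toReal_mul, ENNReal.toReal_ofReal hc]
  have caseGG : ∀ x' x'', ‖x' - x₀‖ ≤ ε → ‖x'' - x₀‖ ≤ ε → GB x' → GB x'' →
      |S x' - S x''| ≤ CC * M * (ε^m)⁻¹ * ‖x' - x''‖ * mass.toReal := by
    intro x' x'' hx' hx'' hb' hb''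
    rw [repG x' hx' hb', repG x'' hx'' hb'']
    have i1 : Integrable (fun y => ρε (x' - y) * (f (y,t) * g (y,t))
        - f (x',t) * (ρε (x' - y) * g (y,t))) :=
      (intA x' hx' (hGBA x' hb')).sub ((intB x' hx' hb').const_mul _)
    have i2 : Integrable (fun y => ρε (x'' - y) * (f (y,t) * g (y,t))
        - f (x'',t) * (ρε (x'' - y) * g (y,t))) :=
      (intA x'' hx'' (hGBA x'' hb'')).sub ((intB x'' hx'' hb'').const_mul _)
    have hres := hdiffbound _ _ (CC * M * (ε^m)⁻¹ * ‖x' - x''‖)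
      (by positivity) i1 i2 ?_
    · calc |(∫ y, (ρε (x' - y) * (f (y,t) * g (y,t)) - f (x',t) * (ρε (x' - y) * g (y,t))))
          - ∫ y, (ρε (x'' - y) * (f (y,t) * g (y,t)) - f (x'',t) * (ρε (x'' - y) * g (y,t)))|
          ≤ CC * M * (ε^m)⁻¹ * ‖x' - x''‖ * mass.toReal := hres
      _ = CC * M * (ε^m)⁻¹ * ‖x' - x''‖ * mass.toReal := rfl
    · intro y
      by_cases hz : ρε (x' - y) = 0 ∧ ρε (x'' - y) = 0
      · rw [hz.1, hz.2]
        simp only [zero_mul, mul_zero, sub_zero, sub_self, abs_zero]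
        exact mul_nonneg (Set.indicator_nonneg (fun _ _ => by positivity) y) (abs_nonneg _)
      · have hy : y ∈ Metric.closedBall x₀ (R*ε) := by
          rcases not_and_or.1 hz with h | h
          · exact hwin x' y hx' h
          · exact hwin x'' y hx'' h
        rw [Set.indicator_of_mem hy]
        have halg : ρε (x' - y) * (f (y,t) * g (y,t)) - f (x',t) * (ρε (x' - y) * g (y,t))
            - (ρε (x'' - y) * (f (y,t) * g (y,t)) - f (x'',t) * (ρε (x'' - y) * g (y,t)))
            = ((ρε (x' - y) - ρε (x'' - y)) * (f (y,t) - f (x',t))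
              + ρε (x'' - y) * (f (x'',t) - f (x',t))) * g (y,t) := by ring
        rw [halg, abs_mul]
        have hyx' : ‖y - x'‖ ≤ (R+1)*ε := by
          have h1 : ‖y - x₀‖ ≤ R*ε := by
            rw [← dist_eq_norm]; exact Metric.mem_closedBall.1 hy
          have : y - x' = (y - x₀) - (x' - x₀) := by abel
          rw [this]
          calc ‖(y - x₀) - (x' - x₀)‖ ≤ ‖y - x₀‖ + ‖x' - x₀‖ := norm_sub_le _ _
          _ ≤ R*ε + ε := add_le_add h1 hx'
          _ = (R+1)*ε := by ring
        have ht1 : |ρε (x' - y) - ρε (x'' - y)| ≤ (ε^m)⁻¹ * ε⁻¹ * Lρ * ‖x' - x''‖ := by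
          have := hρL (x' - y) (x'' - y)
          simpa [sub_sub_sub_cancel_right] using this
        have ht2 : |f (y,t) - f (x',t)| ≤ M * ((R+1)*ε) :=
          le_trans (hflip y x') (by
            exact mul_le_mul_of_nonneg_left hyx' hM.le)
        have ht3 : |f (x'',t) - f (x',t)| ≤ M * ‖x' - x''‖ := by
          rw [← norm_sub_rev x'' x']
          exact hflip x'' x'
        have hbound : |(ρε (x' - y) - ρε (x'' - y)) * (f (y,t) - f (x',t))
              + ρε (x'' - y) * (f (x'',t) - f (x',t))|
            ≤ CC * M * (ε^m)⁻¹ * ‖x' - x''‖ := by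
          have e1 : |(ρε (x' - y) - ρε (x'' - y)) * (f (y,t) - f (x',t))|
              ≤ ((ε^m)⁻¹ * ε⁻¹ * Lρ * ‖x' - x''‖) * (M * ((R+1)*ε)) := by
            rw [abs_mul]
            exact mul_le_mul ht1 ht2 (abs_nonneg _) (by positivity)
          have e2 : |ρε (x'' - y) * (f (x'',t) - f (x',t))|
              ≤ ((ε^m)⁻¹ * Bρ) * (M * ‖x' - x''‖) := by
            rw [abs_mul]
            exact mul_le_mul (hρB _) ht3 (abs_nonneg _) (by positivity)
          calc |(ρε (x' - y) - ρε (x'' - y)) * (f (y,t) - f (x',t))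
              + ρε (x'' - y) * (f (x'',t) - f (x',t))| ≤ _ := abs_add_le _ _
          _ ≤ ((ε^m)⁻¹ * ε⁻¹ * Lρ * ‖x' - x''‖) * (M * ((R+1)*ε))
              + ((ε^m)⁻¹ * Bρ) * (M * ‖x' - x''‖) := add_le_add e1 e2
          _ = (Lρ * (R+1) * (ε⁻¹ * ε) + Bρ) * M * (ε^m)⁻¹ * ‖x' - x''‖ := by ring
          _ = (Lρ * (R+1) + Bρ) * M * (ε^m)⁻¹ * ‖x' - x''‖ := by
              rw [inv_mul_cancel₀ hε.ne']; ring_nf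
          _ ≤ CC * M * (ε^m)⁻¹ * ‖x' - x''‖ := by
              have hRR : Lρ * (R+1) + Bρ ≤ CC := by
                simp only [hCC]
                have : Lρ * (R+1) ≤ Lρ * (3*R) := by
                  apply mul_le_mul_of_nonneg_left _ hL
                  linarith
                linarith
              apply mul_le_mul_of_nonneg_right _ (norm_nonneg _)
              apply mul_le_mul_of_nonneg_right _ hεm.le
              exact mul_le_mul_of_nonneg_right hRR hM.le
        exact mul_le_mul_of_nonneg_right hbound (abs_nonneg _)
  -- zero point of f near a non-measurable window
  have hstar : ∀ x, ¬ GB x → GA x → ∃ ys, ‖ys - x‖ ≤ r*ε ∧ f (ys, t) = 0 := by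
    intro x hnb hga
    by_contra hno
    push_neg at hno
    apply hnb
    have hga' : AEStronglyMeasurable (fun y => ρε (x - y) * (f (y,t) * g (y,t))) volume := hga
    have heq : (fun y => ρε (x - y) * g (y,t))
        = fun y => (ρε (x - y) * (f (y,t) * g (y,t))) * (f (y,t))⁻¹ := by
      funext y
      by_cases hy : ‖y - x‖ ≤ r*ε
      · have hf0 : f (y,t) ≠ 0 := hno y hy
        field_simp
      · have hz : ρε (x - y) = 0 := by
          apply hρ0
          rw [norm_sub_rev] at hy
          exact lt_of_not_ge hy
        simp [hz]
    show AEStronglyMeasurable (fun y => ρε (x - y) * g (y,t)) volume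
    rw [heq]
    exact hga'.mul ((hfslice.measurable.inv).aestronglyMeasurable)
  have caseB1 : ∀ x' x'', ‖x' - x₀‖ ≤ ε → ‖x'' - x₀‖ ≤ ε → ¬ GB x' → ¬ GB x'' → GA x' → GA x'' →
      |S x' - S x''| ≤ CC * M * (ε^m)⁻¹ * ‖x' - x''‖ * mass.toReal := by
    intro x' x'' hx' hx'' hnb' hnb'' ha' ha''
    obtain ⟨ys, hys, hfys⟩ := hstar x' hnb' ha'
    have hfsmall : ∀ y, y ∈ Metric.closedBall x₀ (R*ε) → |f (y,t)| ≤ M * (3*R*ε) := by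
      intro y hy
      have h1 : |f (y,t)| = |f (y,t) - f (ys,t)| := by rw [hfys, sub_zero]
      rw [h1]
      refine le_trans (hflip y ys) ?_
      apply mul_le_mul_of_nonneg_left _ hM.le
      have hyx0 : ‖y - x₀‖ ≤ R*ε := by rw [← dist_eq_norm]; exact Metric.mem_closedBall.1 hy
      have : y - ys = (y - x₀) - (x' - x₀) - (ys - x') := by abel
      rw [this]
      calc ‖(y - x₀) - (x' - x₀) - (ys - x')‖ ≤ ‖(y - x₀) - (x' - x₀)‖ + ‖ys - x'‖ :=
            norm_sub_le _ _
      _ ≤ (‖y - x₀‖ + ‖x' - x₀‖) + ‖ys - x'‖ := by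
          exact add_le_add_left (norm_sub_le _ _) _
      _ ≤ (R*ε + ε) + r*ε := by
          exact add_le_add (add_le_add hyx0 hx') hys
      _ ≤ 3*R*ε := by nlinarith
    rw [repB x' hnb', repB x'' hnb'']
    refine hdiffbound _ _ (CC * M * (ε^m)⁻¹ * ‖x' - x''‖) (by positivity)
      (intA x' hx' ha') (intA x'' hx'' ha'') ?_
    intro y
    by_cases hz : ρε (x' - y) = 0 ∧ ρε (x'' - y) = 0
    · rw [hz.1, hz.2]
      simp only [zero_mul, sub_self, abs_zero]
      exact mul_nonneg (Set.indicator_nonneg (fun _ _ => by positivity) y) (abs_nonneg _)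
    · have hy : y ∈ Metric.closedBall x₀ (R*ε) := by
        rcases not_and_or.1 hz with h | h
        · exact hwin x' y hx' h
        · exact hwin x'' y hx'' h
      rw [Set.indicator_of_mem hy]
      have halg : ρε (x' - y) * (f (y,t) * g (y,t)) - ρε (x'' - y) * (f (y,t) * g (y,t))
          = ((ρε (x' - y) - ρε (x'' - y)) * f (y,t)) * g (y,t) := by ring
      rw [halg, abs_mul]
      refine mul_le_mul_of_nonneg_right ?_ (abs_nonneg _)
      rw [abs_mul]
      have ht1 : |ρε (x' - y) - ρε (x'' - y)| ≤ (ε^m)⁻¹ * ε⁻¹ * Lρ * ‖x' - x''‖ := by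
        have := hρL (x' - y) (x'' - y)
        simpa [sub_sub_sub_cancel_right] using this
      calc |ρε (x' - y) - ρε (x'' - y)| * |f (y,t)|
          ≤ ((ε^m)⁻¹ * ε⁻¹ * Lρ * ‖x' - x''‖) * (M * (3*R*ε)) :=
            mul_le_mul ht1 (hfsmall y hy) (abs_nonneg _) (by positivity)
      _ = (Lρ * (3*R) * (ε⁻¹ * ε) + 0) * M * (ε^m)⁻¹ * ‖x' - x''‖ := by ring
      _ = Lρ * (3*R) * M * (ε^m)⁻¹ * ‖x' - x''‖ := by
          rw [inv_mul_cancel₀ hε.ne']; ring_nf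
      _ ≤ CC * M * (ε^m)⁻¹ * ‖x' - x''‖ := by
          have hRR : Lρ * (3*R) ≤ CC := by simp only [hCC]; linarith
          apply mul_le_mul_of_nonneg_right _ (norm_nonneg _)
          apply mul_le_mul_of_nonneg_right _ hεm.le
          exact mul_le_mul_of_nonneg_right hRR hM.le
  -- the direction vector and the line
  set e : Fin m → ℝ := Pi.single i 1 with he
  have hnorme : ‖e‖ ≤ 1 := by
    rw [pi_norm_le_iff_of_nonneg zero_le_one]
    intro j
    rcases eq_or_ne j i with h | h
    · simp [he, h]
    · simp [he, Pi.single_apply, h]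
  set xx : ℝ → (Fin m → ℝ) := fun u => x₀ + (ε*u) • e with hxxdef
  have hxxd : ∀ u v : ℝ, ‖xx u - xx v‖ ≤ ε * |u - v| := by
    intro u v
    have h1 : xx u - xx v = (ε*u - ε*v) • e := by
      simp only [hxxdef]
      rw [add_sub_add_left_eq_sub, ← sub_smul]
    rw [h1, norm_smul, Real.norm_eq_abs]
    calc |ε*u - ε*v| * ‖e‖ ≤ |ε*u - ε*v| * 1 := by
          exact mul_le_mul_of_nonneg_left hnorme (abs_nonneg _)
    _ = |ε * (u - v)| := by rw [mul_one]; ring_nf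
    _ = ε * |u - v| := by rw [abs_mul, abs_of_pos hε]
  have hxx0 : ∀ u : ℝ, |u| ≤ 1 → ‖xx u - x₀‖ ≤ ε := by
    intro u hu
    have h1 : xx u - x₀ = (ε*u) • e := by simp [hxxdef]
    rw [h1, norm_smul, Real.norm_eq_abs, abs_mul, abs_of_pos hε]
    calc ε * |u| * ‖e‖ ≤ ε * 1 * 1 :=
      mul_le_mul (mul_le_mul_of_nonneg_left hu hε.le) hnorme (norm_nonneg _) (by positivity)
    _ = ε := by ring
  -- derivative of u ↦ S (xx u) at 0
  have hderiv : HasDerivAt (fun u => S (xx u)) (ε * pdH hcomm i p) 0 := by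
    have h1 : HasDerivAt (fun u : ℝ => ((x₀, t) : (Fin m → ℝ) × ℝ) + u • ((ε • e, (0:ℝ))))
        ((ε • e, (0:ℝ))) 0 := by
      simpa using ((hasDerivAt_id (0:ℝ)).smul_const ((ε • e, (0:ℝ)))).const_add ((x₀, t))
    have heqfun : (fun u : ℝ => ((x₀, t) : (Fin m → ℝ) × ℝ) + u • ((ε • e, (0:ℝ))))
        = fun u : ℝ => ((xx u, t) : (Fin m → ℝ) × ℝ) := by
      funext u
      simp only [hxxdef, Prod.mk_add_mk, Prod.smul_mk, Prod.ext_iff]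
      constructor
      · rw [smul_smul, mul_comm u ε]
      · simp
    rw [heqfun] at h1
    have h2 : HasFDerivAt hcomm (fderiv ℝ hcomm p) ((fun u : ℝ => ((xx u, t) : (Fin m → ℝ) × ℝ)) 0) := by
      have : ((fun u : ℝ => ((xx u, t) : (Fin m → ℝ) × ℝ)) 0) = p := by
        simp [hxxdef, hx₀, ht]
      rw [this]
      exact hdiff.hasFDerivAt
    have h3 := h2.comp_hasDerivAt 0 h1
    have h4 : (hcomm ∘ fun u : ℝ => ((xx u, t) : (Fin m → ℝ) × ℝ)) = fun u => S (xx u) := rfl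
    rw [h4] at h3
    have h5 : (fderiv ℝ hcomm p) (ε • e, (0:ℝ)) = ε * pdH hcomm i p := by
      have : ((ε • e, (0:ℝ)) : (Fin m → ℝ) × ℝ) = ε • ((e, 0) : (Fin m → ℝ) × ℝ) := by
        simp [Prod.smul_mk]
      rw [this, ContinuousLinearMap.map_smul]
      simp [pdH, he, smul_eq_mul]
    rw [h5] at h3
    exact h3
  -- apply the type-Lipschitz lemma
  classical
  have hKey : |ε * pdH hcomm i p| ≤ CC * M * (ε^m)⁻¹ * mass.toReal * ε := by
    refine typeLip (by positivity) (fun u => if GB (xx u) then 0 else if GA (xx u) then 1 else 2)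
      hderiv ?_
    intro u v hu hv hτ
    have hu1 : |u| ≤ 1 := by rw [abs_of_pos hu.1]; exact hu.2
    have hv1 : |v| ≤ 1 := by rw [abs_of_pos hv.1]; exact hv.2
    have hxu := hxx0 u hu1
    have hxv := hxx0 v hv1
    have hfinal : |S (xx u) - S (xx v)| ≤ CC * M * (ε^m)⁻¹ * ‖xx u - xx v‖ * mass.toReal := by
      by_cases hbu : GB (xx u)
      · have hbv : GB (xx v) := by
          by_contra hbv
          simp only [if_pos hbu, if_neg hbv] at hτ
          split_ifs at hτ <;> simp at hτ
        exact caseGG _ _ hxu hxv hbu hbv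
      · by_cases hau : GA (xx u)
        · have hbv : ¬ GB (xx v) := by
            intro hbv
            simp only [if_neg hbu, if_pos hbv, if_pos hau] at hτ
            simp at hτ
          have hav : GA (xx v) := by
            by_contra hav
            simp only [if_neg hbu, if_pos hau, if_neg hbv, if_neg hav] at hτ
            simp at hτ
          exact caseB1 _ _ hxu hxv hbu hbv hau hav
        · have hbv : ¬ GB (xx v) := by
            intro hbv
            simp only [if_neg hbu, if_pos hbv, if_neg hau] at hτ
            simp at hτ
          have hav : ¬ GA (xx v) := by
            intro hav
            simp only [if_neg hbu, if_neg hau, if_neg hbv, if_pos hav] at hτ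
            simp at hτ
          rw [zeroB2 _ hbu hau, zeroB2 _ hbv hav, sub_self, abs_zero]
          positivity
    refine hfinal.trans ?_
    calc CC * M * (ε^m)⁻¹ * ‖xx u - xx v‖ * mass.toReal
        ≤ CC * M * (ε^m)⁻¹ * (ε * |u - v|) * mass.toReal := by
          apply mul_le_mul_of_nonneg_right _ ENNReal.toReal_nonneg
          exact mul_le_mul_of_nonneg_left (hxxd u v) (by positivity)
    _ = CC * M * (ε^m)⁻¹ * mass.toReal * ε * |u - v| := by ring
  have hpd : |pdH hcomm i p| ≤ CC * M * (ε^m)⁻¹ * mass.toReal := by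
    rw [abs_mul, abs_of_pos hε] at hKey
    have h2 : ε * |pdH hcomm i p| ≤ ε * (CC * M * (ε^m)⁻¹ * mass.toReal) := by linarith
    exact le_of_mul_le_mul_left h2 hε
  calc ENNReal.ofReal |pdH hcomm i p| ≤ ENNReal.ofReal (CC * M * (ε^m)⁻¹ * mass.toReal) :=
        ENNReal.ofReal_le_ofReal hpd
  _ = ENNReal.ofReal (CC * M * (ε^m)⁻¹) * ENNReal.ofReal mass.toReal := by
      rw [ENNReal.ofReal_mul (by positivity)]
  _ = ENNReal.ofReal (CC * M * (ε^m)⁻¹) * mass := by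
      rw [ENNReal.ofReal_toReal hmass]

lemma window_l2 {m : ℕ} {g : (Fin m → ℝ) × ℝ → ℝ}
    (hg2 : Integrable (fun p : (Fin m → ℝ) × ℝ => (g p) ^ 2)) {ρr : ℝ} (hρr : 0 < ρr) :
    ∫⁻ p in halfSpace m, (∫⁻ y in Metric.closedBall p.1 ρr, ENNReal.ofReal |g (y, p.2)|)^2
      ≤ (ENNReal.ofReal ((2*ρr)^m))^2
        * ENNReal.ofReal (∫ p in halfSpace m, (g p)^2) := by
  set V : ℝ≥0∞ := ENNReal.ofReal ((2*ρr)^m) with hV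
  have hVne : V ≠ ⊤ := ENNReal.ofReal_ne_top
  -- a measurable version of `ofReal |g|`
  have hg2m : AEMeasurable (fun p : (Fin m → ℝ) × ℝ => ENNReal.ofReal ((g p)^2)) volume :=
    ENNReal.measurable_ofReal.comp_aemeasurable hg2.aestronglyMeasurable.aemeasurable
  have hnneq : (fun p : (Fin m → ℝ) × ℝ => ENNReal.ofReal |g p|)
      = fun p => (ENNReal.ofReal ((g p)^2)) ^ ((2:ℝ)⁻¹) := by
    funext p
    rw [← sq_abs, ENNReal.ofReal_pow (abs_nonneg _)]
    rw [← ENNReal.rpow_natCast (ENNReal.ofReal |g p|) 2, ← ENNReal.rpow_mul]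
    norm_num
  have hnnae : AEMeasurable (fun p : (Fin m → ℝ) × ℝ => ENNReal.ofReal |g p|) volume := by
    rw [hnneq]
    exact (ENNReal.continuous_rpow_const.measurable).comp_aemeasurable hg2m
  set Gm : (Fin m → ℝ) × ℝ → ℝ≥0∞ := hnnae.mk _ with hGmdef
  have hGmmeas : Measurable Gm := hnnae.measurable_mk
  have hGmae : (fun p : (Fin m → ℝ) × ℝ => ENNReal.ofReal |g p|) =ᵐ[volume] Gm :=
    hnnae.ae_eq_mk
  -- slicewise a.e. equality
  have hslice : ∀ᵐ t ∂(volume : Measure ℝ), ∀ᵐ y ∂(volume : Measure (Fin m → ℝ)),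
      ENNReal.ofReal |g (y,t)| = Gm (y,t) := by
    have h0 : ∀ᵐ p ∂((volume : Measure (Fin m → ℝ)).prod (volume : Measure ℝ)),
        ENNReal.ofReal |g p| = Gm p := by
      rw [← Measure.volume_eq_prod]
      exact hGmae
    have h1 := (Measure.measurePreserving_swap).quasiMeasurePreserving.ae h0
    exact Measure.ae_ae_of_ae_prod h1
  have hproda : ∀ᵐ p ∂(volume : Measure ((Fin m → ℝ) × ℝ)),
      ∀ᵐ y ∂(volume : Measure (Fin m → ℝ)), ENNReal.ofReal |g (y,p.2)| = Gm (y,p.2) := by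
    rw [ae_iff] at hslice ⊢
    obtain ⟨T, hsub, hTmeas, hT0⟩ := exists_measurable_superset_of_null hslice
    refine measure_mono_null (t := (Set.univ : Set (Fin m → ℝ)) ×ˢ T)
      (fun p hp => Set.mem_prod.2 ⟨Set.mem_univ p.1, hsub hp⟩) ?_
    rw [Measure.volume_eq_prod, Measure.prod_prod, hT0, mul_zero]
  have hcongr : ∫⁻ p in halfSpace m,
        (∫⁻ y in Metric.closedBall p.1 ρr, ENNReal.ofReal |g (y, p.2)|)^2
      = ∫⁻ p in halfSpace m, (∫⁻ y in Metric.closedBall p.1 ρr, Gm (y, p.2))^2 := by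
    refine lintegral_congr_ae (ae_restrict_of_ae (hproda.mono fun p hp => ?_))
    have heq : ∫⁻ y in Metric.closedBall p.1 ρr, ENNReal.ofReal |g (y,p.2)|
        = ∫⁻ y in Metric.closedBall p.1 ρr, Gm (y,p.2) :=
      lintegral_congr_ae (ae_restrict_of_ae hp)
    dsimp only
    rw [heq]
  -- pointwise Cauchy–Schwarz
  have hvol : ∀ x : Fin m → ℝ, volume (Metric.closedBall x ρr) = V := by
    intro x
    rw [hV, Real.volume_pi_closedBall x hρr.le, Fintype.card_fin]
  have hCS : ∀ p : (Fin m → ℝ) × ℝ,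
      (∫⁻ y in Metric.closedBall p.1 ρr, Gm (y, p.2))^2
        ≤ V * ∫⁻ y in Metric.closedBall p.1 ρr, (Gm (y, p.2))^2 := by
    intro p
    set B := Metric.closedBall p.1 ρr with hB
    have hconj : Real.HolderConjugate 2 2 := Real.HolderConjugate.two_two
    have hmeas : AEMeasurable (fun y => Gm (y, p.2)) (volume.restrict B) :=
      (hGmmeas.comp (measurable_id.prodMk measurable_const)).aemeasurable
    have h1 := ENNReal.lintegral_mul_le_Lp_mul_Lq (volume.restrict B) hconj
      (aemeasurable_const (b := (1:ℝ≥0∞))) hmeas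
    simp only [Pi.mul_apply, one_mul, ENNReal.one_rpow, lintegral_const,
      Measure.restrict_apply_univ] at h1
    -- h1 : ∫⁻ Gm ≤ (vol B)^(1/2) * (∫⁻ Gm^(2:ℝ))^(1/2)
    have h2 : (∫⁻ y in B, Gm (y, p.2))^2
        ≤ ((volume B)^((1:ℝ)/2) * (∫⁻ y in B, (Gm (y,p.2))^(2:ℝ))^((1:ℝ)/2))^2 :=
      pow_le_pow_left₀ zero_le h1 2
    have h3 : ((volume B)^((1:ℝ)/2) * (∫⁻ y in B, (Gm (y,p.2))^(2:ℝ))^((1:ℝ)/2))^2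
        = volume B * ∫⁻ y in B, (Gm (y,p.2))^(2:ℝ) := by
      rw [mul_pow, ← ENNReal.rpow_natCast ((volume B)^((1:ℝ)/2)) 2,
        ← ENNReal.rpow_natCast ((∫⁻ y in B, (Gm (y,p.2))^(2:ℝ))^((1:ℝ)/2)) 2,
        ← ENNReal.rpow_mul, ← ENNReal.rpow_mul]
      norm_num
    have h4 : (∫⁻ y in B, (Gm (y,p.2))^(2:ℝ)) = ∫⁻ y in B, (Gm (y,p.2))^2 := by
      refine lintegral_congr fun y => ?_
      rw [← ENNReal.rpow_natCast (Gm (y,p.2)) 2]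
      norm_num
    rw [h3, h4, hvol p.1] at h2
    exact h2
  -- Tonelli
  set ν : Measure ℝ := (volume : Measure ℝ).restrict (Set.Ioi (0:ℝ)) with hν
  have hhs : (volume : Measure ((Fin m → ℝ) × ℝ)).restrict (halfSpace m)
      = ((volume : Measure (Fin m → ℝ))).prod ν := by
    have hset : halfSpace m = (Set.univ : Set (Fin m → ℝ)) ×ˢ Set.Ioi (0:ℝ) := by
      ext p; simp [halfSpace, Set.mem_prod]
    rw [hset, Measure.volume_eq_prod, hν, ← Measure.prod_restrict, Measure.restrict_univ]
  set D : ((Fin m → ℝ) × ℝ) × (Fin m → ℝ) → ℝ≥0∞ :=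
    fun z => if dist z.2 z.1.1 ≤ ρr then (Gm (z.2, z.1.2))^2 else 0 with hD
  have hDmeas : Measurable D := by
    refine Measurable.ite ?_ ?_ measurable_const
    · exact measurableSet_le (continuous_dist.comp
        (continuous_snd.prodMk (continuous_fst.comp continuous_fst))).measurable
        measurable_const
    · exact (hGmmeas.comp ((measurable_snd).prodMk
        ((measurable_snd.comp measurable_fst)))).pow_const 2
  have hinner : ∀ p : (Fin m → ℝ) × ℝ,
      (∫⁻ y in Metric.closedBall p.1 ρr, (Gm (y, p.2))^2) = ∫⁻ y, D (p, y) := by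
    intro p
    rw [← lintegral_indicator measurableSet_closedBall]
    refine lintegral_congr fun y => ?_
    by_cases h : y ∈ Metric.closedBall p.1 ρr
    · rw [Set.indicator_of_mem h]
      simp only [hD]
      rw [if_pos (Metric.mem_closedBall.1 h)]
    · rw [Set.indicator_of_notMem h]
      simp only [hD]
      rw [if_neg (fun hc => h (Metric.mem_closedBall.2 hc))]
  have hTon : ∫⁻ p in halfSpace m, (∫⁻ y in Metric.closedBall p.1 ρr, (Gm (y, p.2))^2)
      = V * ∫⁻ p in halfSpace m, (Gm p)^2 := by
    rw [hhs]
    calc ∫⁻ p, (∫⁻ y in Metric.closedBall p.1 ρr, (Gm (y, p.2))^2)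
            ∂((volume : Measure (Fin m → ℝ)).prod ν)
        = ∫⁻ p, (∫⁻ y, D (p, y)) ∂((volume : Measure (Fin m → ℝ)).prod ν) :=
          lintegral_congr fun p => hinner p
      _ = ∫⁻ t, (∫⁻ x, ∫⁻ y, D ((x, t), y)) ∂ν :=
          lintegral_prod_symm' _ hDmeas.lintegral_prod_right'
      _ = ∫⁻ t, (∫⁻ y, ∫⁻ x, D ((x, t), y)) ∂ν := by
          refine lintegral_congr fun t => ?_
          exact lintegral_lintegral_swap
            ((hDmeas.comp ((measurable_fst.prodMk measurable_const).prodMk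
              measurable_snd)).aemeasurable)
      _ = ∫⁻ t, (∫⁻ y, V * (Gm (y, t))^2) ∂ν := by
          refine lintegral_congr fun t => lintegral_congr fun y => ?_
          have : (fun x => D ((x, t), y))
              = (Metric.closedBall y ρr).indicator (fun _ => (Gm (y, t))^2) := by
            funext x
            by_cases h : x ∈ Metric.closedBall y ρr
            · rw [Set.indicator_of_mem h]
              simp only [hD]
              rw [if_pos]
              rw [dist_comm]
              exact Metric.mem_closedBall.1 h
            · rw [Set.indicator_of_notMem h]
              simp only [hD]
              rw [if_neg]
              intro hc
              exact h (Metric.mem_closedBall.2 (by rw [dist_comm]; exact hc))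
          rw [this, lintegral_indicator measurableSet_closedBall, setLIntegral_const,
            hvol y, mul_comm]
      _ = V * ∫⁻ t, (∫⁻ y, (Gm (y, t))^2) ∂ν := by
          rw [← lintegral_const_mul' V _ hVne]
          exact lintegral_congr fun t => (lintegral_const_mul' V _ hVne)
      _ = V * ∫⁻ p, (Gm p)^2 ∂((volume : Measure (Fin m → ℝ)).prod ν) := by
          rw [lintegral_prod_symm' _ (hGmmeas.pow_const 2)]
  have hback : ∫⁻ p in halfSpace m, (Gm p)^2
      = ENNReal.ofReal (∫ p in halfSpace m, (g p)^2) := by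
    have h1 : ∫⁻ p in halfSpace m, (Gm p)^2
        = ∫⁻ p in halfSpace m, ENNReal.ofReal ((g p)^2) := by
      refine lintegral_congr_ae (ae_restrict_of_ae (hGmae.mono fun p hp => ?_))
      dsimp only
      rw [← hp, ← ENNReal.ofReal_pow (abs_nonneg _), sq_abs]
    rw [h1, ← ofReal_integral_eq_lintegral_ofReal hg2.restrict
      (Eventually.of_forall fun p => sq_nonneg _)]
  calc ∫⁻ p in halfSpace m,
        (∫⁻ y in Metric.closedBall p.1 ρr, ENNReal.ofReal |g (y, p.2)|)^2
      = ∫⁻ p in halfSpace m, (∫⁻ y in Metric.closedBall p.1 ρr, Gm (y, p.2))^2 := hcongr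
    _ ≤ ∫⁻ p in halfSpace m, V * ∫⁻ y in Metric.closedBall p.1 ρr, (Gm (y, p.2))^2 :=
        lintegral_mono fun p => hCS p
    _ = V * ∫⁻ p in halfSpace m, (∫⁻ y in Metric.closedBall p.1 ρr, (Gm (y, p.2))^2) :=
        lintegral_const_mul' V _ hVne
    _ = V * (V * ∫⁻ p in halfSpace m, (Gm p)^2) := by rw [hTon]
    _ = V^2 * ENNReal.ofReal (∫ p in halfSpace m, (g p)^2) := by rw [hback]; ring

/-- **Commutator estimate for horizontal convolution-by-layers**: for
`f ∈ W^{1,∞}(ℝⁿ₊)` (with norm `≤ M`) and `g ∈ L²(ℝⁿ₊)`,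
`‖∂̄(Λ_ε(fg) − f Λ_ε g)‖_{L²(ℝⁿ₊)} ≤ C M ‖g‖_{L²(ℝⁿ₊)}` with `C` independent of `ε > 0`,
where `∂̄` is the horizontal gradient. -/
theorem horizontal_convolution_commutator_estimate (m : ℕ)
    (ρ : (Fin m → ℝ) → ℝ) (hρsmooth : ContDiff ℝ (⊤ : ℕ∞) ρ) (hρsupp : HasCompactSupport ρ)
    (hρnonneg : ∀ x, 0 ≤ ρ x) (hρint : ∫ x : Fin m → ℝ, ρ x = 1) :
    ∃ C : ℝ, 0 < C ∧
      ∀ (f g : (Fin m → ℝ) × ℝ → ℝ) (M ε : ℝ), 0 < ε → 0 ≤ M →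
        (∀ p, |f p| ≤ M) → LipschitzWith (Real.toNNReal M) f →
        Integrable (fun p : (Fin m → ℝ) × ℝ => (g p) ^ 2) →
        Real.sqrt (∫ p in halfSpace m, ∑ i,
            (pdH (fun q =>
                horizConv (fun z => ε ^ (-(m : ℤ)) * ρ (ε⁻¹ • z)) (fun q' => f q' * g q') q
              - f q * horizConv (fun z => ε ^ (-(m : ℤ)) * ρ (ε⁻¹ • z)) g q) i p) ^ 2)
          ≤ C * M * Real.sqrt (∫ p in halfSpace m, (g p) ^ 2) := by
  obtain ⟨B₀, hB₀⟩ := hρsupp.exists_bound_of_continuous hρsmooth.continuous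
  obtain ⟨L₀, hL₀⟩ := ContDiff.lipschitzWith_of_hasCompactSupport hρsupp hρsmooth (by simp)
  obtain ⟨r₀, hr₀⟩ := (hρsupp : IsCompact (tsupport ρ)).isBounded.subset_closedBall 0
  set r : ℝ := max r₀ 1 with hrdef
  set Bρ : ℝ := max B₀ 1 with hBdef
  set Lρ : ℝ := (L₀ : ℝ) with hLdef
  set R : ℝ := 3*r+3 with hRdef
  set CC : ℝ := Lρ*(3*R) + Bρ with hCCdef
  set C : ℝ := Real.sqrt m * (CC * (2*R)^m) + 1 with hCdef
  have hr1 : 1 ≤ r := le_max_right _ _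
  have hB1 : 1 ≤ Bρ := le_max_right _ _
  have hL0 : 0 ≤ Lρ := L₀.coe_nonneg
  have hR1 : 1 ≤ R := by simp only [hRdef]; linarith
  have hCC0 : 0 < CC := by
    have : 0 ≤ Lρ * (3*R) := by positivity
    simp only [hCCdef]; linarith
  have hC0 : 0 < C := by
    have h1 : 0 ≤ Real.sqrt m * (CC * (2*R)^m) :=
      mul_nonneg (Real.sqrt_nonneg _) (by positivity)
    simp only [hCdef]; linarith
  refine ⟨C, hC0, ?_⟩
  intro f g M ε hε hM0 hfM hfLip hg2
  set ρε : (Fin m → ℝ) → ℝ := fun z => ε ^ (-(m:ℤ)) * ρ (ε⁻¹ • z) with hρεdef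
  have hεm : (0:ℝ) < ε^m := by positivity
  have hRHS0 : 0 ≤ C * M * Real.sqrt (∫ p in halfSpace m, (g p)^2) :=
    mul_nonneg (mul_nonneg hC0.le hM0) (Real.sqrt_nonneg _)
  rcases eq_or_lt_of_le hM0 with hM | hM
  · -- M = 0 : f ≡ 0, commutator vanishes
    have hf0 : ∀ p, f p = 0 := by
      intro p
      have := hfM p
      rw [← hM] at this
      exact abs_eq_zero.1 (le_antisymm this (abs_nonneg _))
    have hzero : (fun q => horizConv ρε (fun q' => f q' * g q') q
        - f q * horizConv ρε g q) = fun _ => (0:ℝ) := by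
      funext q
      simp [horizConv, hf0]
    rw [hzero]
    have h0 : (∫ p in halfSpace m, ∑ i : Fin m, (pdH (fun _ => (0:ℝ)) i p)^2) = 0 := by
      have : ∀ p : (Fin m → ℝ) × ℝ, ∑ i : Fin m, (pdH (fun _ => (0:ℝ)) i p)^2 = 0 := by
        intro p
        refine Finset.sum_eq_zero fun i _ => ?_
        simp [pdH]
      simp only [this, integral_zero]
    rw [h0, Real.sqrt_zero]
    exact hRHS0
  · -- M > 0
    have hzpow : (ε : ℝ) ^ (-(m:ℤ)) = (ε^m)⁻¹ := by
      rw [zpow_neg, zpow_natCast]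
    have hρB : ∀ z, |ρε z| ≤ (ε^m)⁻¹ * Bρ := by
      intro z
      simp only [hρεdef]
      rw [abs_mul, hzpow, abs_of_pos (by positivity)]
      refine mul_le_mul_of_nonneg_left ?_ (by positivity)
      refine le_trans ?_ (le_max_left B₀ 1)
      rw [← Real.norm_eq_abs]
      exact hB₀ _
    have hρL : ∀ z w, |ρε z - ρε w| ≤ (ε^m)⁻¹ * ε⁻¹ * Lρ * ‖z - w‖ := by
      intro z w
      simp only [hρεdef]
      rw [← mul_sub, abs_mul, hzpow, abs_of_pos (by positivity)]
      have h1 : |ρ (ε⁻¹ • z) - ρ (ε⁻¹ • w)| ≤ Lρ * (ε⁻¹ * ‖z - w‖) := by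
        have h2 := hL₀.dist_le_mul (ε⁻¹ • z) (ε⁻¹ • w)
        rw [Real.dist_eq, dist_eq_norm, ← smul_sub, norm_smul, Real.norm_eq_abs,
          abs_of_pos (inv_pos.2 hε)] at h2
        exact h2
      calc (ε^m)⁻¹ * |ρ (ε⁻¹ • z) - ρ (ε⁻¹ • w)| ≤ (ε^m)⁻¹ * (Lρ * (ε⁻¹ * ‖z - w‖)) :=
            mul_le_mul_of_nonneg_left h1 (by positivity)
      _ = (ε^m)⁻¹ * ε⁻¹ * Lρ * ‖z - w‖ := by ring
    have hρ0 : ∀ z, r * ε < ‖z‖ → ρε z = 0 := by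
      intro z hz
      simp only [hρεdef]
      have hzero : ρ (ε⁻¹ • z) = 0 := by
        apply image_eq_zero_of_notMem_tsupport
        intro hmem
        have h2 := hr₀ hmem
        rw [Metric.mem_closedBall, dist_zero_right, norm_smul, Real.norm_eq_abs,
          abs_of_pos (inv_pos.2 hε)] at h2
        have h3 : r₀ ≤ r := le_max_left _ _
        have h4 : ε⁻¹ * ‖z‖ ≤ r := le_trans h2 h3
        have h5 : ‖z‖ ≤ r * ε := by
          have := mul_le_mul_of_nonneg_left h4 hε.le
          rw [← mul_assoc, mul_inv_cancel₀ hε.ne', one_mul] at this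
          linarith
        linarith
      rw [hzero, mul_zero]
    -- pointwise master bound
    have hmaster : ∀ (i : Fin m) (p : (Fin m → ℝ) × ℝ),
        ENNReal.ofReal |pdH (fun q => horizConv ρε (fun q' => f q' * g q') q
          - f q * horizConv ρε g q) i p|
        ≤ ENNReal.ofReal (CC * M * (ε^m)⁻¹) *
          ∫⁻ y in Metric.closedBall p.1 (R*ε), ENNReal.ofReal |g (y, p.2)| := by
      intro i p
      have := master (g := g) hε hr1 hB1 hL0 hρB hρL hρ0 hM hfM hfLip i p
      simpa only [hCCdef, hRdef] using this
    have hΦnn : ∀ p : (Fin m → ℝ) × ℝ, 0 ≤ ∑ i : Fin m,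
        (pdH (fun q => horizConv ρε (fun q' => f q' * g q') q
          - f q * horizConv ρε g q) i p)^2 :=
      fun p => Finset.sum_nonneg fun i _ => sq_nonneg _
    by_cases hint : IntegrableOn (fun p => ∑ i : Fin m,
        (pdH (fun q => horizConv ρε (fun q' => f q' * g q') q
          - f q * horizConv ρε g q) i p)^2) (halfSpace m) volume
    swap
    · rw [integral_undef hint, Real.sqrt_zero]
      exact hRHS0
    have hpt : ∀ p : (Fin m → ℝ) × ℝ,
        ENNReal.ofReal (∑ i : Fin m, (pdH (fun q => horizConv ρε (fun q' => f q' * g q') q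
          - f q * horizConv ρε g q) i p)^2)
        ≤ ((m : ℝ≥0∞) * ENNReal.ofReal (CC*M*(ε^m)⁻¹)^2) *
          (∫⁻ y in Metric.closedBall p.1 (R*ε), ENNReal.ofReal |g (y, p.2)|)^2 := by
      intro p
      calc ENNReal.ofReal (∑ i : Fin m, (pdH (fun q => horizConv ρε (fun q' => f q' * g q') q
            - f q * horizConv ρε g q) i p)^2)
          = ∑ i : Fin m, ENNReal.ofReal ((pdH (fun q => horizConv ρε (fun q' => f q' * g q') q
            - f q * horizConv ρε g q) i p)^2) :=
            ENNReal.ofReal_sum_of_nonneg (fun i _ => sq_nonneg _)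
        _ ≤ ∑ _i : Fin m, (ENNReal.ofReal (CC*M*(ε^m)⁻¹) *
            ∫⁻ y in Metric.closedBall p.1 (R*ε), ENNReal.ofReal |g (y, p.2)|)^2 := by
            refine Finset.sum_le_sum fun i _ => ?_
            rw [← sq_abs, ENNReal.ofReal_pow (abs_nonneg _)]
            exact pow_le_pow_left₀ zero_le (hmaster i p) 2
        _ = ((m : ℝ≥0∞) * ENNReal.ofReal (CC*M*(ε^m)⁻¹)^2) *
            (∫⁻ y in Metric.closedBall p.1 (R*ε), ENNReal.ofReal |g (y, p.2)|)^2 := by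
            rw [Finset.sum_const, Finset.card_univ, Fintype.card_fin, nsmul_eq_mul, mul_pow]
            ring
    have hlin : ∫⁻ p in halfSpace m,
        ENNReal.ofReal (∑ i : Fin m, (pdH (fun q => horizConv ρε (fun q' => f q' * g q') q
          - f q * horizConv ρε g q) i p)^2)
        ≤ ((m : ℝ≥0∞) * ENNReal.ofReal (CC*M*(ε^m)⁻¹)^2) *
          ((ENNReal.ofReal ((2*(R*ε))^m))^2 *
            ENNReal.ofReal (∫ p in halfSpace m, (g p)^2)) := by
      calc ∫⁻ p in halfSpace m, ENNReal.ofReal (∑ i : Fin m,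
            (pdH (fun q => horizConv ρε (fun q' => f q' * g q') q
              - f q * horizConv ρε g q) i p)^2)
          ≤ ∫⁻ p in halfSpace m, ((m : ℝ≥0∞) * ENNReal.ofReal (CC*M*(ε^m)⁻¹)^2) *
            (∫⁻ y in Metric.closedBall p.1 (R*ε), ENNReal.ofReal |g (y, p.2)|)^2 :=
            lintegral_mono fun p => hpt p
        _ = ((m : ℝ≥0∞) * ENNReal.ofReal (CC*M*(ε^m)⁻¹)^2) *
            ∫⁻ p in halfSpace m,
              (∫⁻ y in Metric.closedBall p.1 (R*ε), ENNReal.ofReal |g (y, p.2)|)^2 :=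
            lintegral_const_mul' _ _ (ENNReal.mul_ne_top (ENNReal.natCast_ne_top m)
              (ENNReal.pow_ne_top ENNReal.ofReal_ne_top))
        _ ≤ _ := mul_le_mul_right (window_l2 hg2 (by positivity : (0:ℝ) < R*ε)) _
    have h1nn : (0:ℝ) ≤ CC*M*(ε^m)⁻¹ := by positivity
    have h2nn : (0:ℝ) ≤ (2*(R*ε))^m := by positivity
    have h3nn : (0:ℝ) ≤ ∫ p in halfSpace m, (g p)^2 :=
      integral_nonneg fun p => sq_nonneg _
    have hfin : ((m : ℝ≥0∞) * ENNReal.ofReal (CC*M*(ε^m)⁻¹)^2) *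
          ((ENNReal.ofReal ((2*(R*ε))^m))^2 *
            ENNReal.ofReal (∫ p in halfSpace m, (g p)^2)) ≠ ⊤ :=
      ENNReal.mul_ne_top
        (ENNReal.mul_ne_top (ENNReal.natCast_ne_top m) (ENNReal.pow_ne_top ENNReal.ofReal_ne_top))
        (ENNReal.mul_ne_top (ENNReal.pow_ne_top ENNReal.ofReal_ne_top) ENNReal.ofReal_ne_top)
    have hint2 : (∫ p in halfSpace m, ∑ i : Fin m,
        (pdH (fun q => horizConv ρε (fun q' => f q' * g q') q
          - f q * horizConv ρε g q) i p)^2)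
        ≤ (m : ℝ) * (CC*M*(ε^m)⁻¹)^2 * (((2*(R*ε))^m)^2 *
            ∫ p in halfSpace m, (g p)^2) := by
      rw [integral_eq_lintegral_of_nonneg_ae (Eventually.of_forall (fun p => hΦnn p))
        hint.aestronglyMeasurable]
      calc (∫⁻ p in halfSpace m, ENNReal.ofReal (∑ i : Fin m,
            (pdH (fun q => horizConv ρε (fun q' => f q' * g q') q
              - f q * horizConv ρε g q) i p)^2)).toReal
          ≤ (((m : ℝ≥0∞) * ENNReal.ofReal (CC*M*(ε^m)⁻¹)^2) *
            ((ENNReal.ofReal ((2*(R*ε))^m))^2 *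
              ENNReal.ofReal (∫ p in halfSpace m, (g p)^2))).toReal :=
            ENNReal.toReal_mono hfin hlin
        _ = (m : ℝ) * (CC*M*(ε^m)⁻¹)^2 * (((2*(R*ε))^m)^2 *
              ∫ p in halfSpace m, (g p)^2) := by
            rw [ENNReal.toReal_mul, ENNReal.toReal_mul, ENNReal.toReal_mul,
              ENNReal.toReal_pow, ENNReal.toReal_pow, ENNReal.toReal_ofReal h1nn,
              ENNReal.toReal_ofReal h2nn, ENNReal.toReal_ofReal h3nn,
              ENNReal.toReal_natCast]
    have hA : (0:ℝ) ≤ Real.sqrt m * (CC * (2*R)^m) * M :=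
      mul_nonneg (mul_nonneg (Real.sqrt_nonneg _) (by positivity)) hM0
    have hkey : (m : ℝ) * (CC*M*(ε^m)⁻¹)^2 * (((2*(R*ε))^m)^2 *
            ∫ p in halfSpace m, (g p)^2)
        = (Real.sqrt m * (CC * (2*R)^m) * M)^2 * ∫ p in halfSpace m, (g p)^2 := by
      have hs2 : Real.sqrt m ^ 2 = (m:ℝ) := Real.sq_sqrt (Nat.cast_nonneg m)
      have hsplit : (2*(R*ε))^m = (2*R)^m * ε^m := by
        rw [show (2*(R*ε)) = (2*R)*ε by ring, mul_pow]
      have hsq : (Real.sqrt m * (CC * (2*R)^m) * M)^2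
          = (m:ℝ) * ((CC * (2*R)^m) * M)^2 := by
        rw [mul_pow, mul_pow, hs2]; ring
      rw [hsplit, hsq]
      calc (m : ℝ) * (CC*M*(ε^m)⁻¹)^2 * (((2*R)^m * ε^m)^2 * ∫ p in halfSpace m, (g p)^2)
          = (m:ℝ) * ((CC * (2*R)^m) * M)^2 * ((ε^m)⁻¹ * ε^m)^2
            * ∫ p in halfSpace m, (g p)^2 := by ring
        _ = (m:ℝ) * ((CC * (2*R)^m) * M)^2 * ∫ p in halfSpace m, (g p)^2 := by
            rw [inv_mul_cancel₀ hεm.ne', one_pow, mul_one]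
    refine le_trans (Real.sqrt_le_sqrt hint2) ?_
    rw [hkey, Real.sqrt_mul (sq_nonneg _), Real.sqrt_sq hA]
    have hle : Real.sqrt m * (CC*(2*R)^m) ≤ C := by
      simp only [hCdef]; linarith
    calc Real.sqrt m * (CC * (2*R)^m) * M * Real.sqrt (∫ p in halfSpace m, (g p)^2)
        ≤ C * M * Real.sqrt (∫ p in halfSpace m, (g p)^2) := by
          refine mul_le_mul_of_nonneg_right ?_ (Real.sqrt_nonneg _)
          exact mul_le_mul_of_nonneg_right hle hM0
end

section
/- Let Ω ⊆ ℝ³ be a bounded smooth domain and suppose u ∈ C¹(Ω̄; ℝ³) satisfies curl u = f in Ω with div f = 0. Then for each connected component Γᵢ of ∂Ω (i ≥ 1, bounded complement components), ∫_{Γᵢ} f · N dS = 0, and consequently ∫_Γ f · N dS = 0 for every connected component Γ of ∂Ω. -/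
/-!
For a relatively clopen piece `C` of `∂Ω`, take a smooth cutoff `φ` equal to `1` near `C` and to
`0` near `∂Ω \ C`. The field `φ f - u × ∇φ` has divergence `φ div f + ∇φ · (f - curl u) = 0` in
`Ω`, and on `∂Ω` its normal component is `𝟙_C f · N`, so the divergence theorem gives
`∫_C f · N dσ = 0`. A connected component of the compact set `∂Ω` is the intersection of a
decreasing sequence of such clopen pieces, and the flux through it is the limit of these zeros.
-/

open MeasureTheory

/-- Partial derivative `∂f/∂xᵢ` of a scalar function on `ℝ³`. -/
noncomputable def pd (f : (Fin 3 → ℝ) → ℝ) (i : Fin 3) (x : Fin 3 → ℝ) : ℝ :=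
  fderiv ℝ f x (Pi.single i 1)

/-- The divergence `∇ · u` of a vector field on `ℝ³`. -/
noncomputable def vdiv (u : (Fin 3 → ℝ) → (Fin 3 → ℝ)) (x : Fin 3 → ℝ) : ℝ :=
  ∑ i, pd (fun y => u y i) i x

/-- The curl `∇ × u` of a vector field on `ℝ³`. -/
noncomputable def vcurl (u : (Fin 3 → ℝ) → (Fin 3 → ℝ)) (x : Fin 3 → ℝ) : Fin 3 → ℝ :=
  ![pd (fun y => u y 2) 1 x - pd (fun y => u y 1) 2 x,
    pd (fun y => u y 0) 2 x - pd (fun y => u y 2) 0 x,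
    pd (fun y => u y 1) 0 x - pd (fun y => u y 0) 1 x]

/-- Euclidean dot product on `ℝ³`. -/
def dot (a b : Fin 3 → ℝ) : ℝ := ∑ i, a i * b i

/-- Cross product on `ℝ³`. -/
def cross (a b : Fin 3 → ℝ) : Fin 3 → ℝ :=
  ![a 1 * b 2 - a 2 * b 1, a 2 * b 0 - a 0 * b 2, a 0 * b 1 - a 1 * b 0]

/-- The gradient of a scalar function on `ℝ³`. -/
noncomputable def grad (f : (Fin 3 → ℝ) → ℝ) (x : Fin 3 → ℝ) : Fin 3 → ℝ :=
  fun i => pd f i x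

open Set Filter Topology TopologicalSpace Manifold

lemma countable_setOf_isClopen (X : Type*) [TopologicalSpace X] [CompactSpace X]
    [SecondCountableTopology X] : {s : Set X | IsClopen s}.Countable := by
  refine ((countable_ofPred_finite_subset (countable_countableBasis X)).image sUnion).mono ?_
  intro s hs
  obtain ⟨t, rfl⟩ := eq_sUnion_finset_of_isTopologicalBasis_of_isCompact_open _
    (isBasis_countableBasis X) s hs.isClosed.isCompact hs.isOpen
  exact ⟨Subtype.val '' (t : Set (countableBasis X)), ⟨t.finite_toSet.image _,
    by rintro _ ⟨i, -, rfl⟩; exact i.2⟩, rfl⟩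

lemma exists_antitone_isClopen_iInter_eq_connectedComponent {X : Type*} [TopologicalSpace X]
    [CompactSpace X] [T2Space X] [SecondCountableTopology X] (x : X) :
    ∃ D : ℕ → Set X, Antitone D ∧ (∀ n, IsClopen (D n)) ∧ ⋂ n, D n = connectedComponent x := by
  set S := {s : Set X | IsClopen s ∧ x ∈ s}
  have hS : (⨅ s ∈ S, 𝓟 s).HasBasis (· ∈ S) id :=
    hasBasis_biInf_principal (fun s hs t ht => ⟨s ∩ t, ⟨hs.1.inter ht.1, hs.2, ht.2⟩,
      inter_subset_left, inter_subset_right⟩) ⟨univ, isClopen_univ, mem_univ x⟩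
  have := (HasCountableBasis.mk hS
    ((countable_setOf_isClopen X).mono fun s hs => hs.1)).isCountablyGenerated
  obtain ⟨D, hDS, hD⟩ := hS.exists_antitone_subbasis
  refine ⟨D, hD.antitone, fun n => (hDS n).1, ?_⟩
  have hker := hD.toHasBasis.ker.symm.trans hS.ker
  simp only [iInter_true, id] at hker
  rw [hker, connectedComponent_eq_iInter_isClopen, iInter_subtype]
  rfl

lemma IsCompact.exists_antitone_iInter_eq_connectedComponentIn {X : Type*} [TopologicalSpace X]
    [T2Space X] [SecondCountableTopology X] {K : Set X} (hK : IsCompact K) {x : X} (hx : x ∈ K) :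
    ∃ C : ℕ → Set X, Antitone C ∧ (∀ n, C n ⊆ K ∧ IsClosed (C n) ∧ IsClosed (K \ C n)) ∧
      ⋂ n, C n = connectedComponentIn K x := by
  have := isCompact_iff_compactSpace.mp hK
  obtain ⟨D, hanti, hclopen, hD⟩ := exists_antitone_isClopen_iInter_eq_connectedComponent
    (⟨x, hx⟩ : K)
  have hval := hK.isClosed.isClosedMap_subtype_val
  refine ⟨fun n => Subtype.val '' D n, fun m n h => image_mono (hanti h),
    fun n => ⟨Subtype.coe_image_subset _ _, hval _ (hclopen n).isClosed, ?_⟩, ?_⟩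
  · have := image_compl_eq_range_sdiff_image Subtype.val_injective (D n)
    rw [Subtype.range_coe] at this
    simp only [← this]
    exact hval _ (hclopen n).compl.isClosed
  · rw [connectedComponentIn_eq_image hx, ← hD, Subtype.val_injective.injOn.image_iInter_eq]

lemma Bornology.IsBounded.isCompact_frontier {X : Type*} [PseudoMetricSpace X] [ProperSpace X]
    {s : Set X} (hs : Bornology.IsBounded s) : IsCompact (frontier s) :=
  hs.isCompact_closure.of_isClosed_subset isClosed_frontier frontier_subset_closure

lemma dot_add_left (a b c : Fin 3 → ℝ) : dot (a + b) c = dot a c + dot b c := by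
  simp [dot, add_mul, Finset.sum_add_distrib]

lemma dot_single_one_left (i : Fin 3) (v : Fin 3 → ℝ) : dot (Pi.single i 1) v = v i := by
  simp [dot, Pi.single_apply]

lemma cross_zero_right (a : Fin 3 → ℝ) : cross a 0 = 0 := by
  ext i
  fin_cases i <;> simp [cross]

lemma ContDiffOn.cross {u v : (Fin 3 → ℝ) → (Fin 3 → ℝ)} {s : Set (Fin 3 → ℝ)} {n : ℕ∞}
    (hu : ContDiffOn ℝ n u s) (hv : ContDiffOn ℝ n v s) :
    ContDiffOn ℝ n (fun y => cross (u y) (v y)) s := by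
  have hu' := contDiffOn_pi.1 hu
  have hv' := contDiffOn_pi.1 hv
  refine contDiffOn_pi.2 fun i => ?_
  fin_cases i <;> simp only [_root_.cross, Fin.zero_eta, Fin.mk_one, Fin.reduceFinMk, Fin.isValue,
    Matrix.cons_val_zero, Matrix.cons_val_one, Matrix.cons_val_two, Matrix.head_cons,
    Matrix.tail_cons] <;> fun_prop

section VectorCalculus

variable {x : Fin 3 → ℝ}

lemma DifferentiableAt.cross {u v : (Fin 3 → ℝ) → (Fin 3 → ℝ)}
    (hu : DifferentiableAt ℝ u x) (hv : DifferentiableAt ℝ v x) :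
    DifferentiableAt ℝ (fun y => cross (u y) (v y)) x := by
  refine differentiableAt_pi.2 fun i => ?_
  fin_cases i <;> simp only [_root_.cross, Fin.zero_eta, Fin.mk_one, Fin.reduceFinMk, Fin.isValue,
    Matrix.cons_val_zero, Matrix.cons_val_one, Matrix.cons_val_two, Matrix.head_cons,
    Matrix.tail_cons] <;> fun_prop

lemma pd_mul {a b : (Fin 3 → ℝ) → ℝ} (ha : DifferentiableAt ℝ a x)
    (hb : DifferentiableAt ℝ b x) (i : Fin 3) :
    pd (fun y => a y * b y) i x = pd a i x * b x + a x * pd b i x := by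
  simp only [pd, fderiv_fun_mul ha hb, add_apply, smul_apply, smul_eq_mul]
  ring

lemma pd_sub {a b : (Fin 3 → ℝ) → ℝ} (ha : DifferentiableAt ℝ a x)
    (hb : DifferentiableAt ℝ b x) (i : Fin 3) :
    pd (fun y => a y - b y) i x = pd a i x - pd b i x := by
  simp [pd, fderiv_fun_sub ha hb]

lemma vdiv_sub {F G : (Fin 3 → ℝ) → (Fin 3 → ℝ)} (hF : DifferentiableAt ℝ F x)
    (hG : DifferentiableAt ℝ G x) :
    vdiv (fun y => F y - G y) x = vdiv F x - vdiv G x := by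
  simp only [vdiv, Pi.sub_apply, ← Finset.sum_sub_distrib]
  exact Finset.sum_congr rfl fun i _ => pd_sub (by fun_prop) (by fun_prop) i

lemma vdiv_smul {φ : (Fin 3 → ℝ) → ℝ} {F : (Fin 3 → ℝ) → (Fin 3 → ℝ)}
    (hφ : DifferentiableAt ℝ φ x) (hF : DifferentiableAt ℝ F x) :
    vdiv (fun y => φ y • F y) x = dot (grad φ x) (F x) + φ x * vdiv F x := by
  simp only [vdiv, dot, grad, Pi.smul_apply, smul_eq_mul, Finset.mul_sum,
    ← Finset.sum_add_distrib]
  exact Finset.sum_congr rfl fun i _ => pd_mul hφ (by fun_prop) i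

lemma vdiv_cross {u v : (Fin 3 → ℝ) → (Fin 3 → ℝ)} (hu : DifferentiableAt ℝ u x)
    (hv : DifferentiableAt ℝ v x) :
    vdiv (fun y => cross (u y) (v y)) x = dot (v x) (vcurl u x) - dot (u x) (vcurl v x) := by
  simp only [vdiv, vcurl, cross, dot, Fin.sum_univ_three, Fin.isValue, Matrix.cons_val_zero,
    Matrix.cons_val_one, Matrix.cons_val_two, Matrix.head_cons, Matrix.tail_cons]
  simp (disch := fun_prop) only [pd_sub, pd_mul]
  ring

lemma pd_pd {φ : (Fin 3 → ℝ) → ℝ} (hφ : DifferentiableAt ℝ (fderiv ℝ φ) x) (i j : Fin 3) :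
    pd (fun y => pd φ j y) i x = fderiv ℝ (fderiv ℝ φ) x (Pi.single i 1) (Pi.single j 1) := by
  simp [pd, fderiv_clm_apply hφ (differentiableAt_const _)]

lemma vcurl_grad {φ : (Fin 3 → ℝ) → ℝ} (hφ : ContDiffAt ℝ 2 φ x) : vcurl (grad φ) x = 0 := by
  have hd : DifferentiableAt ℝ (fderiv ℝ φ) x :=
    (hφ.fderiv_right (m := 1) le_rfl).differentiableAt one_ne_zero
  have hsymm := hφ.isSymmSndFDerivAt (by simp)
  have hswap (i j : Fin 3) :
      pd (fun y => grad φ y j) i x = pd (fun y => grad φ y i) j x := by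
    simp only [grad]
    rw [pd_pd hd, pd_pd hd, hsymm.eq]
  ext i
  fin_cases i <;> simp [vcurl, hswap 1 2, hswap 2 0, hswap 0 1]

lemma ContDiff.grad {φ : (Fin 3 → ℝ) → ℝ} {n : ℕ∞} (hφ : ContDiff ℝ (n + 1) φ) :
    ContDiff ℝ n (grad φ) :=
  contDiff_pi.2 fun _ => (hφ.fderiv_right le_rfl).clm_apply contDiff_const

lemma vdiv_id_add_const (a : Fin 3 → ℝ) : vdiv (fun y => y + a) x = 3 := by
  simp [vdiv, pd, fderiv_add_const, (hasFDerivAt_apply _ x).fderiv]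

lemma grad_eq_zero_of_eventuallyEq_const {φ : (Fin 3 → ℝ) → ℝ} {c : ℝ}
    (h : φ =ᶠ[𝓝 x] fun _ => c) : grad φ x = 0 := by
  ext i
  simp [grad, pd, h.fderiv_eq]

lemma vdiv_smul_sub_cross_grad {φ : (Fin 3 → ℝ) → ℝ} {u f : (Fin 3 → ℝ) → (Fin 3 → ℝ)}
    (hφ : ContDiff ℝ 2 φ) (hu : DifferentiableAt ℝ u x)
    (hf : DifferentiableAt ℝ f x) :
    vdiv (fun y => φ y • f y - cross (u y) (grad φ y)) x
      = φ x * vdiv f x + dot (grad φ x) (f x - vcurl u x) := by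
  have hφx : DifferentiableAt ℝ φ x := hφ.differentiable two_ne_zero x
  have hgrad : DifferentiableAt ℝ (grad φ) x :=
    (ContDiff.grad (n := 1) hφ).differentiable one_ne_zero x
  rw [vdiv_sub (F := fun y => φ y • f y) (hφx.smul hf) (hu.cross hgrad), vdiv_smul hφx hf,
    vdiv_cross hu hgrad, vcurl_grad hφ.contDiffAt]
  simp only [dot, Pi.sub_apply, Pi.zero_apply, mul_zero, mul_sub, Finset.sum_sub_distrib,
    Finset.sum_const_zero]
  ring

end VectorCalculus

def HasDivergenceTheorem (Ω : Set (Fin 3 → ℝ)) (σ : Measure (Fin 3 → ℝ))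
    (N : (Fin 3 → ℝ) → (Fin 3 → ℝ)) : Prop :=
  ∀ F : (Fin 3 → ℝ) → (Fin 3 → ℝ), ContDiffOn ℝ 1 F (closure Ω) →
    ∫ x in Ω, vdiv F x = ∫ x in frontier Ω, dot (F x) (N x) ∂σ

namespace HasDivergenceTheorem

variable {Ω : Set (Fin 3 → ℝ)} {σ : Measure (Fin 3 → ℝ)} {N : (Fin 3 → ℝ) → (Fin 3 → ℝ)}

lemma integrableOn_normal (hdiv : HasDivergenceTheorem Ω σ N) (hΩo : IsOpen Ω)
    (hne : Ω.Nonempty) (hfin : volume Ω ≠ ⊤) (i : Fin 3) :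
    IntegrableOn (fun y => N y i) (frontier Ω) σ := by
  have hflux (a : Fin 3 → ℝ) :
      IntegrableOn (fun y => dot (y + a) (N y)) (frontier Ω) σ := by
    -- the flux of `y ↦ y + a` is `3 |Ω| ≠ 0`, hence not the junk value of a non-integrable
    -- integrand
    refine Integrable.of_integral_ne_zero ?_
    rw [← hdiv (fun y => y + a) (contDiff_id.add contDiff_const).contDiffOn]
    simp only [vdiv_id_add_const, setIntegral_const, smul_eq_mul]
    have : 0 < volume.real Ω :=
      ENNReal.toReal_pos (hΩo.measure_ne_zero volume hne) hfin
    positivity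
  refine ((hflux (Pi.single i 1)).sub (hflux 0)).congr (ae_of_all _ fun y => ?_)
  simp [dot_add_left, dot_single_one_left]

lemma integrableOn_flux (hdiv : HasDivergenceTheorem Ω σ N) (hΩo : IsOpen Ω)
    (hΩb : Bornology.IsBounded Ω) (hne : Ω.Nonempty) {f : (Fin 3 → ℝ) → (Fin 3 → ℝ)}
    (hf : ContinuousOn f (frontier Ω)) :
    IntegrableOn (fun y => dot (f y) (N y)) (frontier Ω) σ := by
  refine integrable_finsetSum _ fun i _ => ?_
  exact (hdiv.integrableOn_normal hΩo hne hΩb.measure_lt_top.ne i).continuousOn_mul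
    ((continuous_apply i).comp_continuousOn hf) hΩb.isCompact_frontier

lemma setIntegral_flux_eq_zero_of_eq_vcurl (hdiv : HasDivergenceTheorem Ω σ N)
    (hΩo : IsOpen Ω) {u f : (Fin 3 → ℝ) → (Fin 3 → ℝ)}
    (hu : ContDiffOn ℝ 1 u (closure Ω)) (hf : ContDiffOn ℝ 1 f (closure Ω))
    (hcurl : ∀ x ∈ Ω, vcurl u x = f x) (hdivf : ∀ x ∈ Ω, vdiv f x = 0)
    {C : Set (Fin 3 → ℝ)} (hCΩ : C ⊆ frontier Ω) (hC : IsClosed C)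
    (hC' : IsClosed (frontier Ω \ C)) :
    ∫ y in C, dot (f y) (N y) ∂σ = 0 := by
  obtain ⟨φ₀, hφ0, hφ1, -⟩ := exists_contMDiffMap_zero_one_nhds_of_isClosed 𝓘(ℝ, Fin 3 → ℝ)
    (n := 2) hC' hC disjoint_sdiff_left
  set φ : (Fin 3 → ℝ) → ℝ := ⇑φ₀
  have hφ : ContDiff ℝ 2 φ := contMDiff_iff_contDiff.mp φ₀.contMDiff
  set H : (Fin 3 → ℝ) → (Fin 3 → ℝ) := fun y => φ y • f y - cross (u y) (grad φ y)
  have hH : ContDiffOn ℝ 1 H (closure Ω) :=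
    ((hφ.of_le one_le_two).contDiffOn.smul hf).sub
      (hu.cross (ContDiff.grad (n := 1) hφ).contDiffOn)
  have hH_div (x : Fin 3 → ℝ) (hx : x ∈ Ω) : vdiv H x = 0 := by
    have hxΩ : closure Ω ∈ 𝓝 x := mem_of_superset (hΩo.mem_nhds hx) subset_closure
    rw [vdiv_smul_sub_cross_grad hφ ((hu.contDiffAt hxΩ).differentiableAt one_ne_zero)
      ((hf.contDiffAt hxΩ).differentiableAt one_ne_zero), hcurl x hx, hdivf x hx]
    simp [dot]
  have hH_normal (y : Fin 3 → ℝ) (hy : y ∈ frontier Ω) :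
      dot (H y) (N y) = C.indicator (fun y => dot (f y) (N y)) y := by
    have hH_const {c : ℝ} (hc : φ =ᶠ[𝓝 y] fun _ => c) : H y = c • f y := by
      simp [H, grad_eq_zero_of_eventuallyEq_const hc, cross_zero_right, hc.self_of_nhds]
    by_cases hyC : y ∈ C
    · simp [hH_const (eventually_nhdsSet_iff_forall.1 hφ1 y hyC), hyC]
    · simp [hH_const (eventually_nhdsSet_iff_forall.1 hφ0 y ⟨hy, hyC⟩), hyC, dot]
  calc ∫ y in C, dot (f y) (N y) ∂σ
      = ∫ y in frontier Ω, C.indicator (fun y => dot (f y) (N y)) y ∂σ := by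
        rw [setIntegral_indicator hC.measurableSet, inter_eq_right.2 hCΩ]
    _ = ∫ y in frontier Ω, dot (H y) (N y) ∂σ :=
        setIntegral_congr_fun isClosed_frontier.measurableSet fun y hy => (hH_normal y hy).symm
    _ = ∫ x in Ω, vdiv H x := (hdiv H hH).symm
    _ = 0 := by simp [setIntegral_congr_fun hΩo.measurableSet hH_div]

end HasDivergenceTheorem

theorem flux_vanishes_on_boundary_components_general
    (Ω : Set (Fin 3 → ℝ)) (hΩo : IsOpen Ω) (hΩb : Bornology.IsBounded Ω)
    (hΩc : IsConnected Ω)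
    (σ : Measure (Fin 3 → ℝ)) (N : (Fin 3 → ℝ) → (Fin 3 → ℝ))
    (hdivthm : ∀ F : (Fin 3 → ℝ) → (Fin 3 → ℝ), ContDiffOn ℝ 1 F (closure Ω) →
      ∫ x in Ω, vdiv F x = ∫ x in frontier Ω, dot (F x) (N x) ∂σ)
    (u f : (Fin 3 → ℝ) → (Fin 3 → ℝ))
    (hu : ContDiffOn ℝ 1 u (closure Ω))
    (hf : ContDiffOn ℝ 1 f (closure Ω))
    (hcurl : ∀ x ∈ Ω, vcurl u x = f x)
    (hdivf : ∀ x ∈ Ω, vdiv f x = 0) :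
    ∀ x ∈ frontier Ω,
      ∫ y in connectedComponentIn (frontier Ω) x, dot (f y) (N y) ∂σ = 0 := by
  intro x hx
  have hdiv : HasDivergenceTheorem Ω σ N := hdivthm
  obtain ⟨C, hanti, hC, hCx⟩ :=
    hΩb.isCompact_frontier.exists_antitone_iInter_eq_connectedComponentIn hx
  have hflux : IntegrableOn (fun y => dot (f y) (N y)) (C 0) σ :=
    (hdiv.integrableOn_flux hΩo hΩb hΩc.nonempty
      (hf.continuousOn.mono frontier_subset_closure)).mono_set (hC 0).1
  have hlim := tendsto_setIntegral_of_antitone (fun n => (hC n).2.1.measurableSet) hanti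
    ⟨0, hflux⟩
  simp only [hdiv.setIntegral_flux_eq_zero_of_eq_vcurl hΩo hu hf hcurl hdivf (hC _).1 (hC _).2.1
    (hC _).2.2, hCx] at hlim
  exact tendsto_nhds_unique hlim tendsto_const_nhds

/-- If `u ∈ C¹(Ω̄; ℝ³)` satisfies `curl u = f` in `Ω` with `div f = 0`, then the flux of `f`
through every connected component `Γ` of `∂Ω` vanishes: `∫_Γ f · N dS = 0`.  The smooth
bounded domain is encoded by a boundary surface measure `σ` and outward unit normal `N`
satisfying the divergence theorem. -/
theorem flux_vanishes_on_boundary_components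
    (Ω : Set (Fin 3 → ℝ)) (hΩo : IsOpen Ω) (hΩb : Bornology.IsBounded Ω)
    (hΩc : IsConnected Ω)
    (σ : Measure (Fin 3 → ℝ)) (N : (Fin 3 → ℝ) → (Fin 3 → ℝ))
    (hN : ∀ x ∈ frontier Ω, dot (N x) (N x) = 1)
    (hdivthm : ∀ F : (Fin 3 → ℝ) → (Fin 3 → ℝ), ContDiffOn ℝ 1 F (closure Ω) →
      ∫ x in Ω, vdiv F x = ∫ x in frontier Ω, dot (F x) (N x) ∂σ)
    (u f : (Fin 3 → ℝ) → (Fin 3 → ℝ))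
    (hu : ContDiffOn ℝ 1 u (closure Ω))
    (hf : ContDiffOn ℝ 1 f (closure Ω))
    (hcurl : ∀ x ∈ Ω, vcurl u x = f x)
    (hdivf : ∀ x ∈ Ω, vdiv f x = 0) :
    ∀ x ∈ frontier Ω,
      ∫ y in connectedComponentIn (frontier Ω) x, dot (f y) (N y) ∂σ = 0 :=
  flux_vanishes_on_boundary_components_general Ω hΩo hΩb hΩc σ N hdivthm u f hu hf hcurl hdivf
end
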